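/- arXiv:1005.1726 — 4 statements merged into one kernel-verified Lean document; each statement's English description precedes it below -/
import Mathlib

section
/- (Dowling–Wilson inequality for the partition polynomial.) Let G = (V,E) be a connected finite simple graph with n vertices. Then for each k ∈ {1,…,n}, Σ_{i=1}^{k} q_i(G) ≥ Σ_{i=0}^{k−1} q_{n−i}(G). -/
/-!
Connected partitions of `G`, compared through the edges of `G` inside their blocks, form the bond
lattice of `G`, i.e. the lattice of flats of its cycle matroid. It is a geometric lattice in which a
partition with `i` blocks has rank `n - i`; the rank is semimodular because adding a set of edges
merges at least as many components of a smaller edge set as of a larger one. For connected `G` the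
top has rank `n - 1`, so the right-hand side counts the flats of rank `< k` and the left-hand side
those of rank `> r ⊤ - k`.

That the former are at most as many as the latter holds in every geometric lattice (Dowling–Wilson).
By Weisner's theorem the Möbius function alternates in sign (Rota), so `μ(z, ⊤) ≠ 0` and the matrix
`[x ⊔ y = ⊤] = ζ · diag μ(·, ⊤) · ζᵀ` is invertible. If `r x < k` and `r y + k ≤ r ⊤` then
`r (x ⊔ y) ≤ r x + r y < r ⊤`, so the rows of the flats of rank `< k` vanish outside the columns of
the flats of rank `> r ⊤ - k`, and invertibility bounds the number of the former by the number of
the latter.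
-/

open Finset

variable {V : Type*} [Fintype V] [DecidableEq V]

/-- `P` is a set partition of the vertex set `V`, given as a finset of (nonempty,
pairwise disjoint, covering) blocks. -/
def IsPartition (P : Finset (Finset V)) : Prop :=
  ∅ ∉ P ∧ ∀ v : V, ∃! B : Finset V, B ∈ P ∧ v ∈ B

/-- `P` is a connected set partition of `G`: every block induces a connected subgraph. -/
def IsConnPartition (G : SimpleGraph V) (P : Finset (Finset V)) : Prop :=
  IsPartition P ∧ ∀ B ∈ P, (G.induce (B : Set V)).Connected

open scoped Classical in
/-- The finset of all connected set partitions (`Π_c(G)`). -/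
noncomputable def connParts (G : SimpleGraph V) : Finset (Finset (Finset V)) :=
  Finset.univ.filter (IsConnPartition G)

open scoped Classical in
/-- The partition polynomial `Q(G,x) = Σ_{π ∈ Π_c(G)} x^{|π|}`, evaluated at `x : ℤ`. -/
noncomputable def Q (G : SimpleGraph V) (x : ℤ) : ℤ :=
  ∑ P ∈ connParts G, x ^ P.card

open scoped Classical in
/-- `q_i(G)`: the number of connected set partitions of `G` with exactly `i` blocks
(the index `i` taken as an integer). -/
noncomputable def qcount (G : SimpleGraph V) (i : ℤ) : ℕ :=
  ((connParts G).filter (fun P => (P.card : ℤ) = i)).card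

open IncidenceAlgebra

namespace IncidenceAlgebra

variable {𝕜 L : Type*}

lemma mul_apply_eq_sum [Preorder L] [LocallyFiniteOrder L] [Fintype L] [NonUnitalNonAssocSemiring 𝕜]
    (f g : IncidenceAlgebra 𝕜 L) (a b : L) : (f * g) a b = ∑ x, f a x * g x b := by
  rw [mul_apply]
  refine sum_subset (subset_univ _) fun x _ hx ↦ ?_
  rw [mem_Icc, not_and_or] at hx
  rcases hx with hx | hx
  · rw [apply_eq_zero_of_not_le hx, zero_mul]
  · rw [apply_eq_zero_of_not_le hx g, mul_zero]

def toMatrix [LE L] [Zero 𝕜] (f : IncidenceAlgebra 𝕜 L) : Matrix L L 𝕜 := Matrix.of fun a b ↦ f a b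

lemma toMatrix_mul [Preorder L] [LocallyFiniteOrder L] [Fintype L] [NonUnitalNonAssocSemiring 𝕜]
    (f g : IncidenceAlgebra 𝕜 L) : (f * g).toMatrix = f.toMatrix * g.toMatrix := by
  ext a b
  exact mul_apply_eq_sum f g a b

lemma toMatrix_one [Preorder L] [DecidableEq L] [Zero 𝕜] [One 𝕜] :
    (1 : IncidenceAlgebra 𝕜 L).toMatrix = 1 := by
  ext a b
  simp [toMatrix, Matrix.one_apply]

lemma isUnit_toMatrix_zeta [PartialOrder L] [LocallyFiniteOrder L] [Fintype L] [DecidableEq L]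
    [DecidableLE L] [Ring 𝕜] : IsUnit (zeta 𝕜 : IncidenceAlgebra 𝕜 L).toMatrix :=
  ⟨⟨(zeta 𝕜).toMatrix, (mu 𝕜).toMatrix, by rw [← toMatrix_mul, zeta_mul_mu, toMatrix_one],
    by rw [← toMatrix_mul, mu_mul_zeta, toMatrix_one]⟩, rfl⟩

variable [Lattice L] [Fintype L] [DecidableEq L] [DecidableLE L] [LocallyFiniteOrder L] [Ring 𝕜]

/-- Weisner's theorem. -/
theorem sum_mu_filter_sup_eq {a y : L} (h : ¬ a ≤ y) (w : L) :
    ∑ z with z ⊔ a = w, mu 𝕜 y z = 0 := by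
  have hδ : ∀ c, (if c = w then 1 else 0 : 𝕜) = ∑ u, zeta 𝕜 c u * mu 𝕜 u w := fun c ↦ by
    rw [← mul_apply_eq_sum, zeta_mul_mu, one_apply]
  calc ∑ z with z ⊔ a = w, mu 𝕜 y z
      = ∑ z, mu 𝕜 y z * ∑ u, zeta 𝕜 (z ⊔ a) u * mu 𝕜 u w := by
        simp_rw [sum_filter, ← hδ, mul_boole]
    _ = ∑ u, (∑ z, mu 𝕜 y z * zeta 𝕜 z u) * (zeta 𝕜 a u * mu 𝕜 u w) := by
        simp_rw [mul_sum, sum_mul]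
        rw [sum_comm]
        refine sum_congr rfl fun u _ ↦ sum_congr rfl fun z _ ↦ ?_
        simp only [zeta_apply, sup_le_iff]
        split_ifs <;> simp_all
    _ = 0 := by
        simp_rw [← mul_apply_eq_sum, mu_mul_zeta, one_apply, boole_mul, sum_ite_eq, mem_univ,
          if_true, zeta_apply, if_neg h, zero_mul]

end IncidenceAlgebra

lemma Matrix.card_le_card_of_isUnit {ι K : Type*} [Fintype ι] [DecidableEq ι] [Field K]
    {E : Matrix ι ι K} (hE : IsUnit E) {S T : Finset ι} (hST : ∀ x ∈ S, ∀ b ∉ T, E x b = 0) :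
    #S ≤ #T := by
  obtain ⟨E', hEE'⟩ := hE.exists_right_inv
  set A : Matrix S T K := of fun x b ↦ E x b
  set B : Matrix T S K := of fun b x ↦ E' b x
  have hAB : A * B = 1 := by
    ext x x'
    calc ∑ b : T, E x b * E' b x' = (E * E') x x' := by
          rw [sum_coe_sort T (fun b ↦ E x b * E' b x'), mul_apply]
          exact sum_subset (subset_univ T) fun b _ hb ↦ by rw [hST x x.2 b hb, zero_mul]
      _ = (1 : Matrix S S K) x x' := by simp only [hEE', one_apply, Subtype.coe_inj]
  calc #S = (A * B).rank := by rw [hAB, rank_one, Fintype.card_coe]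
    _ ≤ A.rank := rank_mul_le_left _ _
    _ ≤ #T := (rank_le_card_width A).trans_eq (Fintype.card_coe T)

section SupEqTop

open scoped Matrix

def supEqTopMatrix (𝕜 L : Type*) [Lattice L] [OrderTop L] [DecidableEq L] [Zero 𝕜] [One 𝕜] :
    Matrix L L 𝕜 :=
  Matrix.of fun x y ↦ if x ⊔ y = ⊤ then 1 else 0

variable {L : Type*} [Lattice L] [OrderTop L] [Fintype L] [DecidableEq L] [DecidableLE L]
  [LocallyFiniteOrder L] {𝕜 : Type*}

lemma supEqTopMatrix_eq_mul [Ring 𝕜] :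
    supEqTopMatrix 𝕜 L =
      (zeta 𝕜).toMatrix * Matrix.diagonal (fun z ↦ mu 𝕜 z ⊤) * (zeta 𝕜).toMatrixᵀ := by
  ext x b
  rw [supEqTopMatrix, Matrix.of_apply, ← one_apply, ← zeta_mul_mu, mul_apply_eq_sum,
    Matrix.mul_apply]
  refine sum_congr rfl fun z _ ↦ ?_
  simp only [Matrix.mul_diagonal, Matrix.transpose_apply, toMatrix, Matrix.of_apply, zeta_apply,
    sup_le_iff]
  split_ifs <;> simp_all

lemma isUnit_supEqTopMatrix [Field 𝕜] (hμ : ∀ z : L, mu 𝕜 z ⊤ ≠ 0) :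
    IsUnit (supEqTopMatrix 𝕜 L) := by
  rw [supEqTopMatrix_eq_mul]
  refine (isUnit_toMatrix_zeta.mul ?_).mul ((Matrix.isUnit_transpose _).2 isUnit_toMatrix_zeta)
  exact Matrix.isUnit_diagonal.2 (Pi.isUnit_iff.2 fun z ↦ (hμ z).isUnit)

theorem card_le_card_of_sup_ne_top [Field 𝕜] (hμ : ∀ z : L, mu 𝕜 z ⊤ ≠ 0)
    {S T : Finset L} (hST : ∀ x ∈ S, ∀ y ∉ T, x ⊔ y ≠ ⊤) : #S ≤ #T :=
  Matrix.card_le_card_of_isUnit (isUnit_supEqTopMatrix hμ) fun x hx y hy ↦ by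
    simp [supEqTopMatrix, hST x hx y hy]

end SupEqTop

/-- The rank function of a geometric lattice. The last axiom says that intervals are atomistic. -/
structure IsGeometricRank {L : Type*} [Lattice L] (r : L → ℕ) : Prop where
  strictMono : StrictMono r
  semimodular : ∀ x y, r (x ⊔ y) + r (x ⊓ y) ≤ r x + r y
  exists_cover_avoiding : ∀ ⦃x j w : L⦄, x ≤ j → j < w →
    ∃ p, x < p ∧ r p = r x + 1 ∧ p ≤ w ∧ ¬ p ≤ j

namespace IsGeometricRank

variable {L : Type*} [Lattice L] {r : L → ℕ}

lemma rank_sup_le (hr : IsGeometricRank r) (x y : L) : r (x ⊔ y) ≤ r x + r y :=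
  le_self_add.trans (hr.semimodular x y)

lemma rank_sup_of_cover (hr : IsGeometricRank r) {y a z : L} (hya : y < a)
    (ha : r a = r y + 1) (hyz : y ≤ z) (haz : ¬ a ≤ z) : r (z ⊔ a) = r z + 1 := by
  have hinf : r (z ⊓ a) < r a := hr.strictMono (inf_le_right.lt_of_ne fun h ↦ haz (h ▸ inf_le_left))
  have hy : r y ≤ r (z ⊓ a) := hr.strictMono.monotone (le_inf hyz hya.le)
  have hz : r z < r (z ⊔ a) := hr.strictMono (left_lt_sup.2 haz)
  have := hr.semimodular z a
  omega

lemma exists_sup_eq [Fintype L] (hr : IsGeometricRank r) {y a w : L} (hay : ¬ a ≤ y)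
    (hyw : y ≤ w) (haw : a ≤ w) : ∃ z, y ≤ z ∧ ¬ a ≤ z ∧ z ⊔ a = w := by
  classical
  obtain ⟨z, hz, hmax⟩ := exists_max_image {z | y ≤ z ∧ z ≤ w ∧ ¬ a ≤ z} r
    ⟨y, mem_filter.2 ⟨mem_univ _, le_rfl, hyw, hay⟩⟩
  obtain ⟨hyz, hzw, haz⟩ := (mem_filter.1 hz).2
  refine ⟨z, hyz, haz, ?_⟩
  by_contra hne
  -- A cover `p` of `z` below `w` avoiding `z ⊔ a` cannot lie above `a`, contradicting maximality.
  obtain ⟨p, hzp, hp, hpw, hpj⟩ :=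
    hr.exists_cover_avoiding (le_sup_left : z ≤ z ⊔ a) ((sup_le hzw haw).lt_of_ne hne)
  have hap : ¬ a ≤ p := fun hap ↦ by
    have h1 := hr.strictMono (left_lt_sup.2 haz)
    have h2 := hr.strictMono ((sup_le hzp.le hap).lt_of_ne fun h ↦ hpj h.ge)
    omega
  have := hmax p (mem_filter.2 ⟨mem_univ _, hyz.trans hzp.le, hpw, hap⟩)
  omega

variable [Fintype L] [DecidableEq L] [DecidableLE L] [LocallyFiniteOrder L]
  {𝕜 : Type*} [Ring 𝕜] [LinearOrder 𝕜] [IsStrictOrderedRing 𝕜]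

/-- Rota's sign theorem. -/
theorem neg_one_pow_mul_mu_pos (hr : IsGeometricRank r) {y w : L} (hyw : y ≤ w) :
    0 < (-1 : 𝕜) ^ (r w - r y) * mu 𝕜 y w := by
  induction hd : r w - r y generalizing w with
  | zero =>
    obtain rfl : y = w := hyw.eq_of_not_lt fun h ↦ by have := hr.strictMono h; omega
    simp
  | succ d ih =>
    -- For an atom `a` of `[y, w]`, Weisner's theorem writes `μ(y, w)` as minus a sum over the
    -- `z ∈ [y, w)` with `z ⊔ a = w`; these are coatoms of `[y, w]`, and one exists.
    obtain ⟨a, hya, ha, haw, -⟩ := hr.exists_cover_avoiding le_rfl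
      (hyw.lt_of_ne (by rintro rfl; omega))
    have hay : ¬ a ≤ y := hya.not_ge
    have hsum := sum_mu_filter_sup_eq (𝕜 := 𝕜) hay w
    have hw : w ∈ ({z | z ⊔ a = w} : Finset L) := mem_filter.2 ⟨mem_univ w, sup_eq_left.2 haw⟩
    rw [← add_sum_erase _ _ hw, add_eq_zero_iff_eq_neg] at hsum
    rw [hsum, mul_neg, ← neg_mul, pow_succ, mul_neg_one, neg_neg, mul_sum]
    have hcoatom : ∀ z ∈ ({z | z ⊔ a = w} : Finset L).erase w, y ≤ z →
        0 < (-1 : 𝕜) ^ d * mu 𝕜 y z := fun z hz hyz ↦ by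
      obtain ⟨hzw, -, rfl⟩ := mem_erase.1 hz |>.imp_right mem_filter.1
      have haz : ¬ a ≤ z := fun h ↦ hzw (sup_eq_left.2 h).symm
      exact ih hyz (by have := hr.rank_sup_of_cover hya ha hyz haz; omega)
    refine sum_pos' (fun z hz ↦ ?_) ?_
    · by_cases hyz : y ≤ z
      · exact (hcoatom z hz hyz).le
      · rw [apply_eq_zero_of_not_le hyz, mul_zero]
    · obtain ⟨z₀, hyz₀, haz₀, hz₀⟩ := hr.exists_sup_eq hay hyw haw
      have hz₀ : z₀ ∈ ({z | z ⊔ a = w} : Finset L).erase w :=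
        mem_erase.2 ⟨fun h ↦ haz₀ (h ▸ haw), mem_filter.2 ⟨mem_univ _, hz₀⟩⟩
      exact ⟨z₀, hz₀, hcoatom z₀ hz₀ hyz₀⟩

theorem mu_ne_zero (hr : IsGeometricRank r) {y w : L} (hyw : y ≤ w) : mu 𝕜 y w ≠ 0 :=
  fun h ↦ by simpa [h] using hr.neg_one_pow_mul_mu_pos (𝕜 := 𝕜) hyw

/-- The Dowling–Wilson inequality. -/
theorem card_rank_lt_le [BoundedOrder L] (hr : IsGeometricRank r) (k : ℕ) :
    #{x | r x < k} ≤ #{x | r ⊤ < r x + k} :=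
  card_le_card_of_sup_ne_top (𝕜 := ℚ) (fun _ ↦ hr.mu_ne_zero le_top) fun x hx b hb h ↦ by
    have := hr.rank_sup_le x b
    simp only [mem_filter, mem_univ, true_and] at hx hb
    rw [h] at this
    omega

end IsGeometricRank

section IsPartition

variable {P : Finset (Finset V)} {C : Finset V} {v : V}

omit [Fintype V] [DecidableEq V] in
lemma IsPartition.eq_of_mem (hP : IsPartition P) {C' : Finset V} (hC : C ∈ P) (hC' : C' ∈ P)
    (hv : v ∈ C) (hv' : v ∈ C') : C = C' :=
  (hP.2 v).unique ⟨hC, hv⟩ ⟨hC', hv'⟩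

omit [Fintype V] in
lemma IsPartition.card_filter_notMem_add_one (hP : IsPartition P) (p : Finset V → Prop)
    [DecidablePred p] (hC : C ∈ P) (hv : v ∈ C) (hpC : p C) :
    #{C' ∈ P | p C' ∧ v ∉ C'} + 1 = #{C' ∈ P | p C'} := by
  have : {C' ∈ P | p C'} = insert C {C' ∈ P | p C' ∧ v ∉ C'} := by
    ext C'
    simp only [mem_filter, mem_insert]
    refine ⟨fun ⟨hC', hp⟩ ↦ ?_, ?_⟩
    · by_cases hvC' : v ∈ C'
      exacts [.inl (hP.eq_of_mem hC' hC hvC' hv), .inr ⟨hC', hp, hvC'⟩]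
    · rintro (rfl | ⟨hC', hp, -⟩)
      exacts [⟨hC, hpC⟩, ⟨hC', hp⟩]
  rw [this, card_insert_of_notMem fun h ↦ (mem_filter.1 h).2.2 hv]

end IsPartition

namespace SimpleGraph

open scoped Classical

variable {G : SimpleGraph V} {A F : Finset (Sym2 V)} {P : Finset (Finset V)} {C : Finset V}
  {u v w x y : V}

abbrev fromEdgeFinset (A : Finset (Sym2 V)) : SimpleGraph V := fromEdgeSet A

noncomputable def componentFinset (A : Finset (Sym2 V)) (v : V) : Finset V :=
  {w | (fromEdgeFinset A).Reachable v w}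

lemma mem_componentFinset :
    w ∈ componentFinset A v ↔ (fromEdgeFinset A).Reachable v w := by
  simp [componentFinset]

lemma self_mem_componentFinset : v ∈ componentFinset A v := mem_componentFinset.2 .rfl

lemma componentFinset_eq_iff :
    componentFinset A v = componentFinset A w ↔ (fromEdgeFinset A).Reachable v w := by
  refine ⟨fun h ↦ mem_componentFinset.1 (h ▸ self_mem_componentFinset), fun h ↦ ?_⟩
  ext x
  simp only [mem_componentFinset]
  exact ⟨h.symm.trans, h.trans⟩

noncomputable def components (A : Finset (Sym2 V)) : Finset (Finset V) :=
  univ.image (componentFinset A)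

lemma mem_components : C ∈ components A ↔ ∃ v, componentFinset A v = C := by
  simp [components]

lemma componentFinset_mem_components : componentFinset A v ∈ components A :=
  mem_components.2 ⟨v, rfl⟩

lemma isPartition_components (A : Finset (Sym2 V)) : IsPartition (components A) := by
  refine ⟨fun h ↦ ?_, fun v ↦ ⟨componentFinset A v,
    ⟨componentFinset_mem_components, self_mem_componentFinset⟩, ?_⟩⟩
  · obtain ⟨v, hv⟩ := mem_components.1 h
    exact notMem_empty v (hv ▸ self_mem_componentFinset)
  · rintro C ⟨hC, hvC⟩
    obtain ⟨u, rfl⟩ := mem_components.1 hC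
    exact componentFinset_eq_iff.2 (mem_componentFinset.1 hvC)

lemma connected_induce_componentFinset (hA : A ⊆ G.edgeFinset) (v : V) :
    (G.induce (componentFinset A v : Set V)).Connected := by
  have hsupp : (componentFinset A v : Set V) =
      ((fromEdgeFinset A).connectedComponentMk v).supp := by
    ext w
    simp [mem_componentFinset, ConnectedComponent.mem_supp_iff, ConnectedComponent.eq,
      reachable_comm]
  have hle : fromEdgeFinset A ≤ G := fun a b h ↦ by
    simpa using hA (fromEdgeSet_adj _ |>.1 h).1
  rw [hsupp]
  exact (ConnectedComponent.maximal_connected_induce_supp _).1.mono fun _ _ h ↦ hle h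

lemma isConnPartition_components (hA : A ⊆ G.edgeFinset) : IsConnPartition G (components A) :=
  ⟨isPartition_components A, fun C hC ↦ by
    obtain ⟨v, rfl⟩ := mem_components.1 hC
    exact connected_induce_componentFinset hA v⟩

noncomputable def innerEdges (G : SimpleGraph V) (P : Finset (Finset V)) : Finset (Sym2 V) :=
  {e ∈ G.edgeFinset | ∃ C ∈ P, ∀ v ∈ e, v ∈ C}

lemma innerEdges_subset : innerEdges G P ⊆ G.edgeFinset := filter_subset _ _

lemma mk_mem_innerEdges : s(u, v) ∈ innerEdges G P ↔ G.Adj u v ∧ ∃ C ∈ P, u ∈ C ∧ v ∈ C := by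
  simp [innerEdges]

lemma _root_.IsPartition.mem_of_reachable (hP : IsPartition P) (hA : A ⊆ innerEdges G P)
    (h : (fromEdgeFinset A).Reachable u v) (hC : C ∈ P) (hu : u ∈ C) : v ∈ C := by
  rw [reachable_iff_reflTransGen] at h
  induction h with
  | refl => exact hu
  | tail _ hbc ih =>
    obtain ⟨-, C', hC', hbC', hcC'⟩ := mk_mem_innerEdges.1 (hA ((fromEdgeSet_adj _).1 hbc).1)
    rwa [hP.eq_of_mem hC hC' ih hbC']

lemma componentFinset_innerEdges (hP : IsConnPartition G P) (hC : C ∈ P) (hv : v ∈ C) :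
    componentFinset (innerEdges G P) v = C := by
  refine Subset.antisymm (fun w hw ↦ hP.1.mem_of_reachable subset_rfl (mem_componentFinset.1 hw)
    hC hv) fun w hw ↦ mem_componentFinset.2 ?_
  let φ : G.induce (C : Set V) →g fromEdgeFinset (innerEdges G P) :=
    ⟨Subtype.val, fun {a b} h ↦ (fromEdgeSet_adj _).2
      ⟨mk_mem_innerEdges.2 ⟨h, C, hC, a.2, b.2⟩, G.ne_of_adj h⟩⟩
  exact ((hP.2 C hC).preconnected ⟨v, hv⟩ ⟨w, hw⟩).map φ

lemma components_innerEdges (hP : IsConnPartition G P) : components (innerEdges G P) = P := by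
  ext C
  rw [mem_components]
  constructor
  · rintro ⟨v, rfl⟩
    obtain ⟨C', ⟨hC', hvC'⟩, -⟩ := hP.1.2 v
    rwa [componentFinset_innerEdges hP hC' hvC']
  · intro hC
    obtain ⟨v, hv⟩ := nonempty_iff_ne_empty.2 fun h ↦ hP.1.1 (h ▸ hC)
    exact ⟨v, componentFinset_innerEdges hP hC hv⟩

lemma subset_innerEdges_components (hA : A ⊆ G.edgeFinset) : A ⊆ innerEdges G (components A) := by
  intro e he
  induction e using Sym2.ind with | _ u v =>
  have huv : G.Adj u v := by simpa using hA he
  refine mk_mem_innerEdges.2 ⟨huv, _, componentFinset_mem_components,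
    self_mem_componentFinset, mem_componentFinset.2 (Adj.reachable ?_)⟩
  exact (fromEdgeSet_adj _).2 ⟨he, huv.ne⟩

lemma innerEdges_components_subset (hP : IsPartition P) (hA : A ⊆ innerEdges G P) :
    innerEdges G (components A) ⊆ innerEdges G P := by
  intro e he
  induction e using Sym2.ind with | _ u v =>
  obtain ⟨huv, C, hC, huC, hvC⟩ := mk_mem_innerEdges.1 he
  obtain ⟨x, rfl⟩ := mem_components.1 hC
  obtain ⟨C', ⟨hC', huC'⟩, -⟩ := hP.2 u
  have hreach := (mem_componentFinset.1 huC).symm.trans (mem_componentFinset.1 hvC)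
  exact mk_mem_innerEdges.2 ⟨huv, C', hC', huC', hP.mem_of_reachable hA hreach hC' huC'⟩

omit [Fintype V] in
lemma reachable_insert_iff :
    (fromEdgeFinset (insert s(u, v) A)).Reachable x y ↔
      (fromEdgeFinset A).Reachable x y ∨
      (fromEdgeFinset A).Reachable x u ∧
        (fromEdgeFinset A).Reachable v y ∨
      (fromEdgeFinset A).Reachable x v ∧
        (fromEdgeFinset A).Reachable u y := by
  have hle : fromEdgeFinset A ≤
      fromEdgeFinset (insert s(u, v) A) :=
    fromEdgeSet_mono (by simp)
  have huv : (fromEdgeFinset (insert s(u, v) A)).Reachable u v := by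
    rcases eq_or_ne u v with rfl | huv
    · rfl
    · exact Adj.reachable ((fromEdgeSet_adj _).2 ⟨by simp, huv⟩)
  refine ⟨fun h ↦ ?_, ?_⟩
  · rw [reachable_iff_reflTransGen] at h
    induction h with
    | refl => exact .inl .rfl
    | tail _ hbc ih =>
      obtain ⟨hbc, hne⟩ := (fromEdgeSet_adj _).1 hbc
      rcases mem_insert.1 (mem_coe.1 hbc) with heq | hbc
      · rcases Sym2.eq_iff.1 heq with ⟨rfl, rfl⟩ | ⟨rfl, rfl⟩
        · rcases ih with h | ⟨h, -⟩ | ⟨h, -⟩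
          exacts [.inr (.inl ⟨h, .rfl⟩), .inr (.inl ⟨h, .rfl⟩), .inl h]
        · rcases ih with h | ⟨h, -⟩ | ⟨h, -⟩
          exacts [.inr (.inr ⟨h, .rfl⟩), .inl h, .inr (.inr ⟨h, .rfl⟩)]
      · have hbc := Adj.reachable ((fromEdgeSet_adj _).2 ⟨hbc, hne⟩)
        rcases ih with h | ⟨h, h'⟩ | ⟨h, h'⟩
        exacts [.inl (h.trans hbc), .inr (.inl ⟨h, h'.trans hbc⟩), .inr (.inr ⟨h, h'.trans hbc⟩)]
  · rintro (h | ⟨h, h'⟩ | ⟨h, h'⟩)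
    exacts [h.mono hle, (h.mono hle).trans (huv.trans (h'.mono hle)),
      (h.mono hle).trans (huv.symm.trans (h'.mono hle))]

lemma components_insert_of_reachable (h : (fromEdgeFinset A).Reachable u v) :
    components (insert s(u, v) A) = components A := by
  have : componentFinset (insert s(u, v) A) = componentFinset A := funext fun x ↦ by
    ext y
    simp only [mem_componentFinset, reachable_insert_iff]
    refine ⟨?_, .inl⟩
    rintro (h' | ⟨h₁, h₂⟩ | ⟨h₁, h₂⟩)
    exacts [h', h₁.trans (h.trans h₂), h₁.trans (h.symm.trans h₂)]
  rw [components, this, components]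

lemma componentFinset_insert_of_not_reachable (hu : ¬(fromEdgeFinset A).Reachable x u)
    (hv : ¬(fromEdgeFinset A).Reachable x v) :
    componentFinset (insert s(u, v) A) x = componentFinset A x := by
  ext y
  simp only [mem_componentFinset]
  rw [reachable_insert_iff]
  simp [hu, hv]

lemma card_components_insert_of_not_reachable (h : ¬(fromEdgeFinset A).Reachable u v) :
    #(components (insert s(u, v) A)) + 1 = #(components A) := by
  -- Besides the block of `u`, the new edge set has the blocks of `A` avoiding both `u` and `v`.
  have hA' : {C ∈ components (insert s(u, v) A) | u ∉ C} = {C ∈ components A | u ∉ C ∧ v ∉ C} := by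
    ext C
    simp only [mem_filter, mem_components]
    constructor
    · rintro ⟨⟨x, rfl⟩, hxu⟩
      have hu : ¬(fromEdgeFinset A).Reachable x u := fun h ↦
        hxu (mem_componentFinset.2 (reachable_insert_iff.2 (.inl h)))
      have hv : ¬(fromEdgeFinset A).Reachable x v := fun h ↦
        hxu (mem_componentFinset.2 (reachable_insert_iff.2 (.inr (.inr ⟨h, .rfl⟩))))
      rw [componentFinset_insert_of_not_reachable hu hv]
      exact ⟨⟨x, rfl⟩, mt mem_componentFinset.1 hu, mt mem_componentFinset.1 hv⟩
    · rintro ⟨⟨x, rfl⟩, hxu, hxv⟩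
      have := componentFinset_insert_of_not_reachable (mt mem_componentFinset.2 hxu)
        (mt mem_componentFinset.2 hxv)
      exact ⟨⟨x, this⟩, this ▸ hxu⟩
  have hcardA' := (isPartition_components (insert s(u, v) A)).card_filter_notMem_add_one
    (v := u) (fun _ ↦ True) componentFinset_mem_components self_mem_componentFinset trivial
  have hcardA := (isPartition_components A).card_filter_notMem_add_one (v := u) (fun _ ↦ True)
    componentFinset_mem_components self_mem_componentFinset trivial
  have hcardA₂ := (isPartition_components A).card_filter_notMem_add_one (v := v) (u ∉ ·)
    componentFinset_mem_components self_mem_componentFinset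
    (mt mem_componentFinset.1 fun h' ↦ h h'.symm)
  simp only [true_and, filter_true] at hcardA' hcardA
  rw [hA'] at hcardA'
  omega

lemma card_components_insert_le (e : Sym2 V) : #(components (insert e A)) ≤ #(components A) := by
  induction e using Sym2.ind with | _ u v =>
  by_cases h : (fromEdgeFinset A).Reachable u v
  · rw [components_insert_of_reachable h]
  · have := card_components_insert_of_not_reachable h
    omega

lemma card_components_le_insert_add_one (e : Sym2 V) :
    #(components A) ≤ #(components (insert e A)) + 1 := by
  induction e using Sym2.ind with | _ u v =>
  by_cases h : (fromEdgeFinset A).Reachable u v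
  · rw [components_insert_of_reachable h]
    omega
  · rw [card_components_insert_of_not_reachable h]

lemma card_components_anti (h : A ⊆ F) : #(components F) ≤ #(components A) := by
  obtain ⟨B, rfl⟩ : ∃ B, F = A ∪ B := ⟨F, (union_eq_right.2 h).symm⟩
  clear h
  induction B using Finset.induction_on with
  | empty => rw [union_empty]
  | insert e B _ ih => exact (union_insert e A B ▸ card_components_insert_le e).trans ih

lemma card_components_add_card_components_union_le (hFA : F ⊆ A) (B : Finset (Sym2 V)) :
    #(components A) + #(components (F ∪ B)) ≤ #(components (A ∪ B)) + #(components F) := by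
  induction B using Finset.induction_on with
  | empty => rw [union_empty, union_empty]
  | insert e B _ ih =>
    rw [union_insert, union_insert]
    induction e using Sym2.ind with | _ u v =>
    by_cases h : (fromEdgeFinset (F ∪ B)).Reachable u v
    · have hle : fromEdgeFinset (F ∪ B) ≤ fromEdgeFinset (A ∪ B) :=
        fromEdgeSet_mono (coe_subset.2 (union_subset_union hFA subset_rfl))
      rwa [components_insert_of_reachable h, components_insert_of_reachable (h.mono hle)]
    · have := card_components_insert_of_not_reachable h
      have := card_components_le_insert_add_one (A := A ∪ B) s(u, v)
      omega

lemma card_components_add_card_components_le (A B : Finset (Sym2 V)) :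
    #(components A) + #(components B) ≤ #(components (A ∪ B)) + #(components (A ∩ B)) := by
  simpa [union_eq_right.2 inter_subset_right] using
    card_components_add_card_components_union_le (inter_subset_left (s₁ := A) (s₂ := B)) B

end SimpleGraph

/-- The bond lattice of `G`. Connected partitions are compared through their inner edge sets, which
for connected partitions is the refinement order. -/
def BondLattice (G : SimpleGraph V) : Type _ := {P : Finset (Finset V) // P ∈ connParts G}

namespace BondLattice

open SimpleGraph
open scoped Classical

variable {G : SimpleGraph V} {A : Finset (Sym2 V)} {P Q : BondLattice G}

noncomputable instance : Fintype (BondLattice G) :=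
  inferInstanceAs (Fintype {P // P ∈ connParts G})

instance : DecidableEq (BondLattice G) :=
  inferInstanceAs (DecidableEq {P // P ∈ connParts G})

omit [DecidableEq V] in
lemma isConnPartition (P : BondLattice G) : IsConnPartition G P.1 := by
  simpa [connParts] using P.2

noncomputable def edges (P : BondLattice G) : Finset (Sym2 V) := innerEdges G P.1

lemma edges_subset (P : BondLattice G) : P.edges ⊆ G.edgeFinset := innerEdges_subset

lemma components_edges (P : BondLattice G) : components P.edges = P.1 :=
  components_innerEdges P.isConnPartition

lemma edges_injective : Function.Injective (edges (G := G)) := fun P Q h ↦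
  Subtype.ext (P.components_edges ▸ Q.components_edges ▸ congrArg components h)

noncomputable instance : PartialOrder (BondLattice G) := PartialOrder.lift edges edges_injective

lemma lt_iff_edges_ssubset : P < Q ↔ P.edges ⊂ Q.edges := Iff.rfl

noncomputable def span (A : Finset (Sym2 V)) (hA : A ⊆ G.edgeFinset) : BondLattice G :=
  ⟨components A, by simpa [connParts] using isConnPartition_components hA⟩

lemma span_val (hA : A ⊆ G.edgeFinset) : (span A hA).1 = components A := rfl

lemma subset_edges_span (hA : A ⊆ G.edgeFinset) : A ⊆ (span A hA).edges :=
  subset_innerEdges_components hA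

lemma span_le_iff (hA : A ⊆ G.edgeFinset) : span A hA ≤ P ↔ A ⊆ P.edges :=
  ⟨fun h ↦ (subset_edges_span hA).trans h, innerEdges_components_subset P.isConnPartition.1⟩

noncomputable instance : Lattice (BondLattice G) where
  sup P Q := span (P.edges ∪ Q.edges) (union_subset P.edges_subset Q.edges_subset)
  le_sup_left _ _ := subset_union_left.trans (subset_edges_span _)
  le_sup_right _ _ := subset_union_right.trans (subset_edges_span _)
  sup_le _ _ _ hPR hQR := (span_le_iff _).2 (union_subset hPR hQR)
  inf P Q := span (P.edges ∩ Q.edges) (inter_subset_left.trans P.edges_subset)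
  inf_le_left _ _ := (span_le_iff _).2 inter_subset_left
  inf_le_right _ _ := (span_le_iff _).2 inter_subset_right
  le_inf _ _ _ hPQ hPR := (subset_inter hPQ hPR).trans (subset_edges_span _)

lemma sup_val : (P ⊔ Q).1 = components (P.edges ∪ Q.edges) := rfl

lemma inf_val : (P ⊓ Q).1 = components (P.edges ∩ Q.edges) := rfl

noncomputable instance : BoundedOrder (BondLattice G) where
  top := span G.edgeFinset subset_rfl
  le_top P := P.edges_subset.trans (subset_edges_span _)
  bot := span ∅ (empty_subset _)
  bot_le _ := (span_le_iff _).2 (empty_subset _)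

noncomputable instance : DecidableLE (BondLattice G) := Classical.decRel _

noncomputable instance : LocallyFiniteOrder (BondLattice G) := Fintype.toLocallyFiniteOrder

noncomputable def rank (P : BondLattice G) : ℕ := Fintype.card V - #P.1

lemma card_le_card (P : BondLattice G) : #P.1 ≤ Fintype.card V :=
  P.components_edges ▸ card_image_le

lemma card_components_insert_edges {e : Sym2 V} (he : e ∈ G.edgeFinset) (heP : e ∉ P.edges) :
    #(components (insert e P.edges)) + 1 = #P.1 := by
  induction e using Sym2.ind with | _ u v =>
  refine P.components_edges ▸ card_components_insert_of_not_reachable fun h ↦ heP ?_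
  refine mk_mem_innerEdges.2 ⟨by simpa using he, _, ?_, self_mem_componentFinset,
    mem_componentFinset.2 h⟩
  exact P.components_edges ▸ componentFinset_mem_components

theorem isGeometricRank_rank : IsGeometricRank (rank (G := G)) where
  strictMono P Q h := by
    obtain ⟨e, heQ, heP⟩ := exists_of_ssubset (lt_iff_edges_ssubset.1 h)
    have h₁ := card_components_insert_edges (Q.edges_subset heQ) heP
    have h₂ := card_components_anti (insert_subset heQ h.le)
    rw [Q.components_edges] at h₂
    have := P.card_le_card
    unfold rank
    omega
  semimodular P Q := by
    have h := card_components_add_card_components_le P.edges Q.edges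
    rw [P.components_edges, Q.components_edges, ← sup_val, ← inf_val] at h
    have := (P ⊔ Q).card_le_card
    have := (P ⊓ Q).card_le_card
    unfold rank
    omega
  exists_cover_avoiding x j w hxj hjw := by
    obtain ⟨e, hew, hej⟩ := exists_of_ssubset (lt_iff_edges_ssubset.1 hjw)
    have hex : e ∉ x.edges := fun h ↦ hej (hxj h)
    have hA := insert_subset (w.edges_subset hew) x.edges_subset
    have he := subset_edges_span hA (mem_insert_self e _)
    refine ⟨span _ hA, ?_, ?_, (span_le_iff hA).2 (insert_subset hew (hxj.trans hjw.le)),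
      fun h ↦ hej (h he)⟩
    · exact (ssubset_iff_of_subset ((subset_insert _ _).trans (subset_edges_span hA))).2
        ⟨e, he, hex⟩
    · have := card_components_insert_edges (w.edges_subset hew) hex
      have := x.card_le_card
      rw [rank, rank, span_val]
      omega

lemma card_top (hG : G.Connected) : #(⊤ : BondLattice G).1 = 1 := by
  have : ∀ v, componentFinset G.edgeFinset v = univ := fun v ↦ by
    ext w
    simpa [mem_componentFinset, fromEdgeFinset] using hG.preconnected v w
  change #(univ.image _) = 1
  rw [funext this, image_const (univ_nonempty_iff.2 hG.nonempty), card_singleton]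

omit [DecidableEq V] in
lemma one_le_card [Nonempty V] (P : BondLattice G) : 1 ≤ #P.1 := by
  obtain ⟨C, ⟨hC, -⟩, -⟩ := P.isConnPartition.1.2 (Classical.arbitrary V)
  exact card_pos.2 ⟨C, hC⟩

omit [DecidableEq V] in
lemma sum_qcount_eq_card_filter {ι : Type*} {t : Finset ι} {f : ι → ℤ} (hf : Set.InjOn f t)
    (p : BondLattice G → Prop) [DecidablePred p] (hp : ∀ P, p P ↔ (#P.1 : ℤ) ∈ t.image f) :
    ∑ i ∈ t, qcount G (f i) = #{P | p P} := by
  classical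
  rw [← sum_image (f := qcount G) hf]
  unfold qcount
  rw [sum_card_fiberwise_eq_card_filter]
  refine (card_bij (fun P _ ↦ P.1) (fun P hP ↦ ?_) (fun _ _ _ _ ↦ Subtype.ext) fun P hP ↦ ?_).symm
  · exact mem_filter.2 ⟨P.2, (hp P).1 (mem_filter.1 hP).2⟩
  · obtain ⟨hP, hPt⟩ := mem_filter.1 hP
    exact ⟨⟨P, hP⟩, mem_filter.2 ⟨mem_univ _, (hp ⟨P, hP⟩).2 hPt⟩, rfl⟩

end BondLattice

open BondLattice

/-- Dowling–Wilson inequality: for a connected graph with `n` vertices and every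
`1 ≤ k ≤ n`, `Σ_{i=1}^{k} q_i(G) ≥ Σ_{i=0}^{k-1} q_{n-i}(G)`. -/
theorem dowling_wilson (G : SimpleGraph V) (hG : G.Connected) (k : ℕ)
    (hk1 : 1 ≤ k) (hk2 : k ≤ Fintype.card V) :
    ∑ i ∈ Finset.Icc 1 k, qcount G (i : ℤ)
      ≥ ∑ i ∈ Finset.range k, qcount G ((Fintype.card V : ℤ) - i) := by
  have : Nonempty V := Fintype.card_pos_iff.1 (by omega)
  have htop := card_top hG
  calc ∑ i ∈ Icc 1 k, qcount G (i : ℤ) = #{P : BondLattice G | rank ⊤ < rank P + k} :=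
        sum_qcount_eq_card_filter Nat.cast_injective.injOn _ fun P ↦ by
          have := P.one_le_card
          have := P.card_le_card
          simp only [mem_image, mem_Icc, rank, htop]
          exact ⟨fun h ↦ ⟨#P.1, by omega, rfl⟩, by rintro ⟨i, hi, h⟩; omega⟩
    _ ≥ #{P | rank P < k} := isGeometricRank_rank.card_rank_lt_le k
    _ = ∑ i ∈ range k, qcount G ((Fintype.card V : ℤ) - i) :=
        (sum_qcount_eq_card_filter (fun i _ j _ h ↦ by simpa using h) _ fun P ↦ by
          have := P.card_le_card
          have := P.one_le_card
          simp only [mem_image, mem_range, rank]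
          exact ⟨fun h ↦ ⟨Fintype.card V - #P.1, by omega, by omega⟩,
            by rintro ⟨i, hi, h⟩; omega⟩).symm
end

section
/- Let G = (V,E) be a finite simple graph and let e = {u,v} ∈ E be a bridge of G (an edge whose removal increases the number of connected components). Then Q(G,x) = Q_{{e}}(G,x) + Q(G−e,x), where Q_{{e}}(G,x) = Σ x^{|π|} over all connected set partitions π of G in which u and v lie in the same block (this polynomial equals Q(G/e,x), the partition polynomial of the graph obtained by contracting e), and G−e is the graph obtained from G by deleting the edge e. -/
/-!
Every connected partition of `G - e` is a connected partition of `G`, and since `G - e` does not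
connect `u` to `v`, it has `u` and `v` in different blocks. Conversely, when `u` and `v` lie in
different blocks no block contains both ends of `e`, so each block induces the same subgraph in
`G` and in `G - e`. Hence the connected partitions of `G` split into those with `u`, `v` in a
common block and those of `G - e`.
-/

open Finset

variable {V : Type*} [Fintype V] [DecidableEq V]

omit [Fintype V] [DecidableEq V] in
theorem SimpleGraph.induce_deleteEdges_singleton_of_not_both_mem (G : SimpleGraph V)
    {u v : V} {s : Set V} (hs : ¬(u ∈ s ∧ v ∈ s)) :
    (G.deleteEdges {s(u, v)}).induce s = G.induce s := by
  ext a b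
  simp only [SimpleGraph.comap_adj, Function.Embedding.coe_subtype,
    SimpleGraph.deleteEdges_adj, Set.mem_singleton_iff, Sym2.eq_iff, and_iff_left_iff_imp]
  rintro - (⟨rfl, rfl⟩ | ⟨rfl, rfl⟩)
  · exact hs ⟨a.2, b.2⟩
  · exact hs ⟨b.2, a.2⟩

namespace IsConnPartition

omit [Fintype V] [DecidableEq V]

variable {G H : SimpleGraph V} {P : Finset (Finset V)}

theorem mono (hP : IsConnPartition G P) (hGH : G ≤ H) : IsConnPartition H P :=
  ⟨hP.1, fun B hB => (hP.2 B hB).mono (SimpleGraph.comap_monotone _ hGH)⟩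

theorem reachable_of_mem_block (hP : IsConnPartition G P) {B : Finset V} (hB : B ∈ P)
    {u v : V} (hu : u ∈ B) (hv : v ∈ B) : G.Reachable u v :=
  ((hP.2 B hB).preconnected ⟨u, hu⟩ ⟨v, hv⟩).map (SimpleGraph.Embedding.induce _).toHom

end IsConnPartition

namespace SimpleGraph.IsBridge

variable {G : SimpleGraph V} {u v : V}

omit [Fintype V] [DecidableEq V] in
theorem isConnPartition_deleteEdges_iff (h : G.IsBridge s(u, v)) {P : Finset (Finset V)} :
    IsConnPartition (G.deleteEdges {s(u, v)}) P ↔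
      IsConnPartition G P ∧ ¬∃ B ∈ P, u ∈ B ∧ v ∈ B := by
  constructor
  · intro hP
    refine ⟨hP.mono (G.deleteEdges_le _), ?_⟩
    rintro ⟨B, hB, hu, hv⟩
    exact h (hP.reachable_of_mem_block hB hu hv)
  · rintro ⟨⟨hpart, hconn⟩, hsplit⟩
    refine ⟨hpart, fun B hB => ?_⟩
    rw [G.induce_deleteEdges_singleton_of_not_both_mem fun huv => hsplit ⟨B, hB, huv⟩]
    exact hconn B hB

open scoped Classical in
theorem connParts_deleteEdges (h : G.IsBridge s(u, v)) :
    connParts (G.deleteEdges {s(u, v)}) =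
      (connParts G).filter (fun P => ¬∃ B ∈ P, u ∈ B ∧ v ∈ B) := by
  ext P
  simp only [connParts, Finset.mem_filter, Finset.mem_univ, true_and,
    h.isConnPartition_deleteEdges_iff]

end SimpleGraph.IsBridge

open scoped Classical in
/-- Bridge decomposition: if `e = {u,v}` is a bridge of `G` then
`Q(G,x) = Q_{{e}}(G,x) + Q(G-e,x)`, where `Q_{{e}}(G,x)` sums `x^{|π|}` over the
connected set partitions of `G` having `u` and `v` in a common block. -/
theorem bridge_decomposition (G : SimpleGraph V) (u v : V)
    (h : G.IsBridge s(u, v)) (x : ℤ) :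
    Q G x
      = (∑ P ∈ (connParts G).filter (fun P => ∃ B ∈ P, u ∈ B ∧ v ∈ B), x ^ P.card)
        + Q (G.deleteEdges {s(u, v)}) x := by
  rw [Q, Q, h.connParts_deleteEdges, Finset.sum_filter_add_sum_filter_not]
end

section
/- Let C_n be the cycle graph on n ≥ 3 vertices. Then Q(C_n, x) = (1+x)^n − 1 − (n−1)x. -/
open Finset

variable {V : Type*} [Fintype V] [DecidableEq V]

/-! Cutting the cycle `C_n` after each point of a nonempty set `S ⊆ ℤ/n` (deleting the edges
`{i, i + 1}` with `i ∈ S`) leaves `#S` arcs, which form a connected partition. Conversely a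
connected partition other than `{V}` is recovered from its set of cut points this way, and that
set has at least two elements. Hence `Q(C_n, x) = x + ∑_{#S ≥ 2} x ^ #S`. The arc containing `v`
is the fibre over `prevCut S v`, the first point of `S` met walking backwards from `v - 1`. -/

open SimpleGraph

section Partitions

variable {α : Type*}

def SameBlock (P : Finset (Finset α)) (u v : α) : Prop :=
  ∃ B ∈ P, u ∈ B ∧ v ∈ B

namespace IsPartition

variable {P : Finset (Finset α)}

lemma eq_of_mem_s9 (hP : IsPartition P) {B C : Finset α} {v : α} (hB : B ∈ P) (hC : C ∈ P)
    (hvB : v ∈ B) (hvC : v ∈ C) : B = C := by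
  obtain ⟨D, -, hD⟩ := hP.2 v
  rw [hD B ⟨hB, hvB⟩, hD C ⟨hC, hvC⟩]

lemma nonempty_of_mem (hP : IsPartition P) {B : Finset α} (hB : B ∈ P) : B.Nonempty :=
  nonempty_iff_ne_empty.2 fun h => hP.1 (h ▸ hB)

lemma sameBlock_iff (hP : IsPartition P) {B : Finset α} {u v : α} (hB : B ∈ P) (hv : v ∈ B) :
    SameBlock P u v ↔ u ∈ B :=
  ⟨fun ⟨_, hC, huC, hvC⟩ => hP.eq_of_mem_s9 hC hB hvC hv ▸ huC, fun hu => ⟨B, hB, hu, hv⟩⟩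

variable [Fintype α]

lemma eq_singleton_univ_of_univ_mem (hP : IsPartition P) (hU : univ ∈ P) : P = {univ} := by
  refine eq_singleton_iff_unique_mem.2 ⟨hU, fun B hB => ?_⟩
  obtain ⟨v, hv⟩ := hP.nonempty_of_mem hB
  exact hP.eq_of_mem_s9 hB hU hv (mem_univ v)

lemma eq_singleton_univ_of_card_eq_one (hP : IsPartition P) (h : #P = 1) : P = {univ} := by
  obtain ⟨B, rfl⟩ := card_eq_one.1 h
  congr
  refine eq_univ_of_forall fun v => ?_
  obtain ⟨C, ⟨hC, hvC⟩, -⟩ := hP.2 v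
  exact mem_singleton.1 hC ▸ hvC

end IsPartition

variable [Fintype α] {β : Type*} [DecidableEq β]

def fiber (f : α → β) (b : β) : Finset α :=
  {a | f a = b}

@[simp]
lemma mem_fiber {f : α → β} {b : β} {a : α} : a ∈ fiber f b ↔ f a = b := by
  simp [fiber]

variable [DecidableEq α]

def fibers (f : α → β) : Finset (Finset α) :=
  (univ.image f).image (fiber f)

lemma mem_fibers {f : α → β} {B : Finset α} : B ∈ fibers f ↔ ∃ a, fiber f (f a) = B := by
  simp [fibers]

lemma sameBlock_fibers_iff {f : α → β} {u v : α} : SameBlock (fibers f) u v ↔ f u = f v := by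
  constructor
  · rintro ⟨B, hB, hu, hv⟩
    obtain ⟨a, rfl⟩ := mem_fibers.1 hB
    simp_all
  · intro h
    exact ⟨_, mem_fibers.2 ⟨v, rfl⟩, by simpa using h, by simp⟩

lemma isPartition_fibers (f : α → β) : IsPartition (fibers f) := by
  refine ⟨fun h => ?_, fun v => ⟨fiber f (f v), ⟨mem_fibers.2 ⟨v, rfl⟩, by simp⟩, ?_⟩⟩
  · obtain ⟨a, ha⟩ := mem_fibers.1 h
    have : a ∈ fiber f (f a) := mem_fiber.2 rfl
    simp [ha] at this
  · rintro B ⟨hB, hvB⟩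
    obtain ⟨a, rfl⟩ := mem_fibers.1 hB
    ext u
    simp_all

lemma card_fibers (f : α → β) : #(fibers f) = #(univ.image f) := by
  refine card_image_of_injOn fun b hb b' _ h => ?_
  obtain ⟨a, -, rfl⟩ := mem_image.1 hb
  exact mem_fiber.1 (h ▸ mem_fiber.2 rfl : a ∈ fiber f b')

lemma eq_fibers_of_sameBlock_iff {P : Finset (Finset α)} (hP : IsPartition P) {f : α → β}
    (h : ∀ u v, SameBlock P u v ↔ f u = f v) : P = fibers f := by
  have block_eq : ∀ B ∈ P, ∀ v ∈ B, B = fiber f (f v) := fun B hB v hv => by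
    ext u
    simp [← h, hP.sameBlock_iff hB hv]
  ext B
  refine ⟨fun hB => ?_, fun hB => ?_⟩
  · obtain ⟨v, hv⟩ := hP.nonempty_of_mem hB
    exact mem_fibers.2 ⟨v, (block_eq B hB v hv).symm⟩
  · obtain ⟨v, rfl⟩ := mem_fibers.1 hB
    obtain ⟨C, ⟨hC, hvC⟩, -⟩ := hP.2 v
    exact block_eq C hC v hvC ▸ hC

end Partitions

open Fin.NatCast Fin.CommRing

lemma SimpleGraph.Connected.induce_eq_of_adj {α β : Type*} {G : SimpleGraph α} {s : Set α}
    (hs : (G.induce s).Connected) {f : α → β} (hf : ∀ u ∈ s, ∀ v ∈ s, G.Adj u v → f u = f v)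
    {u v : α} (hu : u ∈ s) (hv : v ∈ s) : f u = f v := by
  suffices ∀ a b : s, (G.induce s).Walk a b → f a = f b from
    this ⟨u, hu⟩ ⟨v, hv⟩ (hs.preconnected _ _).some
  intro a b p
  induction p with
  | nil => rfl
  | cons hadj _ ih => exact (hf _ (Subtype.prop _) _ (Subtype.prop _) hadj).trans ih

section PrevCut

variable {n : ℕ} [NeZero n]

noncomputable def prevCutDist (S : Finset (Fin n)) (v : Fin n) : ℕ :=
  sInf {k : ℕ | v - 1 - k ∈ S}

noncomputable def prevCut (S : Finset (Fin n)) (v : Fin n) : Fin n :=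
  v - 1 - prevCutDist S v

variable {S : Finset (Fin n)}

lemma prevCutDist_le {v : Fin n} {k : ℕ} (h : v - 1 - k ∈ S) : prevCutDist S v ≤ k :=
  Nat.sInf_le h

lemma prevCut_mem (hS : S.Nonempty) (v : Fin n) : prevCut S v ∈ S := by
  obtain ⟨j, hj⟩ := hS
  refine Nat.sInf_mem (s := {k : ℕ | v - 1 - k ∈ S}) ⟨(v - 1 - j).val, ?_⟩
  simpa using hj

lemma prevCutDist_add_one_of_mem {i : Fin n} (hi : i ∈ S) : prevCutDist S (i + 1) = 0 :=
  Nat.le_zero.1 (prevCutDist_le (by simpa using hi))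

lemma prevCutDist_add_one_of_notMem (hS : S.Nonempty) {i : Fin n} (hi : i ∉ S) :
    prevCutDist S (i + 1) = prevCutDist S i + 1 := by
  obtain ⟨e, he⟩ : ∃ e, prevCutDist S (i + 1) = e + 1 := by
    refine Nat.exists_eq_add_one.2 (Nat.pos_of_ne_zero fun h => hi ?_)
    simpa [prevCut, h] using prevCut_mem hS (i + 1)
  have h₁ : prevCutDist S i ≤ e := by
    refine prevCutDist_le ?_
    have h := prevCut_mem hS (i + 1)
    rwa [prevCut, he, show i + 1 - 1 - ((e + 1 : ℕ) : Fin n) = i - 1 - e by push_cast; ring] at h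
  have h₂ : prevCutDist S (i + 1) ≤ prevCutDist S i + 1 := by
    refine prevCutDist_le ?_
    rw [show i + 1 - 1 - ((prevCutDist S i + 1 : ℕ) : Fin n) = prevCut S i by
      push_cast [prevCut]; ring]
    exact prevCut_mem hS i
  omega

lemma prevCut_add_one_of_mem {i : Fin n} (hi : i ∈ S) : prevCut S (i + 1) = i := by
  simp [prevCut, prevCutDist_add_one_of_mem hi]

lemma prevCut_add_one_of_notMem (hS : S.Nonempty) {i : Fin n} (hi : i ∉ S) :
    prevCut S (i + 1) = prevCut S i := by
  rw [prevCut, prevCut, prevCutDist_add_one_of_notMem hS hi]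
  push_cast
  ring

lemma prevCut_induction (hS : S.Nonempty) {p : Fin n → Prop} (start : ∀ i ∈ S, p (i + 1))
    (step : ∀ i ∉ S, p i → p (i + 1)) (v : Fin n) : p v := by
  obtain ⟨i, rfl⟩ : ∃ i, v = i + 1 := ⟨v - 1, by ring⟩
  induction h : prevCutDist S (i + 1) generalizing i with
  | zero => exact start i (by simpa [prevCut, h] using prevCut_mem hS (i + 1))
  | succ k ih =>
    have hi : i ∉ S := fun hi => by simp [prevCutDist_add_one_of_mem hi] at h
    obtain ⟨j, rfl⟩ : ∃ j, i = j + 1 := ⟨i - 1, by ring⟩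
    exact step _ hi (ih j (by rw [prevCutDist_add_one_of_notMem hS hi] at h; omega))

lemma image_prevCut (hS : S.Nonempty) : univ.image (prevCut S) = S := by
  ext i
  simp only [mem_image, mem_univ, true_and]
  exact ⟨fun ⟨v, hv⟩ => hv ▸ prevCut_mem hS v, fun hi => ⟨i + 1, prevCut_add_one_of_mem hi⟩⟩

lemma prevCut_ne_self (hS : 1 < #S) (v : Fin n) : prevCut S v ≠ v := by
  intro h
  obtain ⟨j, hj, hjv⟩ := exists_mem_ne hS v
  set d := prevCutDist S v
  have h' : v - 1 - (d : Fin n) = v := h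
  have hdm : d ≤ (v - 1 - j).val := prevCutDist_le (by simpa using hj)
  -- `v - 1 - d = v` forces `n ∣ d + 1`, so `d ≥ n - 1`; squeezed by `hdm`, `j = v - 1 - d = v`.
  have hdvd : n ∣ d + 1 := by
    rw [← Fin.natCast_eq_zero]
    push_cast
    linear_combination (-1 : Fin n) * h'
  have hd : (v - 1 - j).val = d := by
    have := Nat.le_of_dvd (Nat.succ_pos d) hdvd
    have := (v - 1 - j).is_lt
    omega
  apply hjv
  have := congrArg (fun k : ℕ => v - 1 - (k : Fin n)) hd
  simp only [Fin.cast_val_eq_self, sub_sub_cancel] at this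
  exact this.trans h

open scoped Classical in
noncomputable def cuts (P : Finset (Finset (Fin n))) : Finset (Fin n) :=
  {i | ¬ SameBlock P i (i + 1)}

lemma notMem_cuts {P : Finset (Finset (Fin n))} {i : Fin n} :
    i ∉ cuts P ↔ SameBlock P i (i + 1) := by
  simp [cuts]

lemma IsPartition.cuts_nonempty {P : Finset (Finset (Fin n))} (hP : IsPartition P)
    (hU : P ≠ {univ}) : (cuts P).Nonempty := by
  rw [nonempty_iff_ne_empty]
  intro h
  obtain ⟨B, ⟨hB, h0⟩, -⟩ := hP.2 0
  have hk : ∀ k : ℕ, (k : Fin n) ∈ B := by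
    intro k
    induction k with
    | zero => simpa using h0
    | succ k ih =>
      obtain ⟨C, hC, hkC, hkC'⟩ := notMem_cuts.1 (h ▸ notMem_empty (k : Fin n))
      rw [hP.eq_of_mem_s9 hC hB hkC ih] at hkC'
      simpa using hkC'
  exact hU (hP.eq_singleton_univ_of_univ_mem
    (eq_univ_of_forall (fun v => Fin.cast_val_eq_self v ▸ hk v) ▸ hB))

noncomputable def arcPartition (S : Finset (Fin n)) : Finset (Finset (Fin n)) :=
  fibers (prevCut S)

lemma card_arcPartition {S : Finset (Fin n)} (hS : S.Nonempty) : #(arcPartition S) = #S := by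
  rw [arcPartition, card_fibers, image_prevCut hS]

lemma cuts_arcPartition {S : Finset (Fin n)} (hS : 1 < #S) : cuts (arcPartition S) = S := by
  have hne : S.Nonempty := card_pos.1 (by omega)
  ext i
  rw [← not_iff_not, notMem_cuts, arcPartition, sameBlock_fibers_iff]
  by_cases hi : i ∈ S
  · simp [hi, prevCut_add_one_of_mem hi, prevCut_ne_self hS]
  · simp [hi, prevCut_add_one_of_notMem hne hi]

end PrevCut

section Cycle

variable {n : ℕ}

lemma cycleGraph_adj_add_one (i : Fin (n + 2)) : (cycleGraph (n + 2)).Adj i (i + 1) :=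
  cycleGraph_adj.2 (Or.inr (by ring))

lemma connected_induce_fiber_prevCut {S : Finset (Fin (n + 2))} (hS : S.Nonempty)
    {c : Fin (n + 2)} (hc : c ∈ S) :
    ((cycleGraph (n + 2)).induce (fiber (prevCut S) c : Set (Fin (n + 2)))).Connected := by
  rw [connected_iff_exists_forall_reachable]
  refine ⟨⟨c + 1, by simp [prevCut_add_one_of_mem hc]⟩, fun ⟨v, hv⟩ => ?_⟩
  refine prevCut_induction hS (p := fun v => ∀ hv : v ∈ (fiber (prevCut S) c : Set (Fin (n + 2))),
    ((cycleGraph (n + 2)).induce _).Reachable ⟨c + 1, _⟩ ⟨v, hv⟩) ?_ ?_ v hv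
  · intro i hi hv
    obtain rfl : i = c := by simpa [prevCut_add_one_of_mem hi] using hv
    rfl
  · intro i hi ih hv
    have hv' : prevCut S i = c := by simpa [prevCut_add_one_of_notMem hS hi] using hv
    exact (ih (by simpa using hv')).trans (induce_adj.2 (cycleGraph_adj_add_one i)).reachable

lemma isConnPartition_arcPartition {S : Finset (Fin (n + 2))} (hS : S.Nonempty) :
    IsConnPartition (cycleGraph (n + 2)) (arcPartition S) := by
  refine ⟨isPartition_fibers _, fun B hB => ?_⟩
  obtain ⟨a, rfl⟩ := mem_fibers.1 hB
  exact connected_induce_fiber_prevCut hS (prevCut_mem hS a)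

variable {P : Finset (Finset (Fin (n + 2)))}

lemma sameBlock_iff_prevCut_eq (hP : IsConnPartition (cycleGraph (n + 2)) P)
    (hS : (cuts P).Nonempty) (u v : Fin (n + 2)) :
    SameBlock P u v ↔ prevCut (cuts P) u = prevCut (cuts P) v := by
  constructor
  · rintro ⟨B, hB, hu, hv⟩
    have step : ∀ i, i ∈ B → i + 1 ∈ B → prevCut (cuts P) i = prevCut (cuts P) (i + 1) := by
      intro i hi hi'
      exact (prevCut_add_one_of_notMem hS (notMem_cuts.2 ⟨B, hB, hi, hi'⟩)).symm
    refine (hP.2 B hB).induce_eq_of_adj (fun a ha b hb hab => ?_) hu hv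
    rcases cycleGraph_adj.1 hab with h | h
    · obtain rfl : a = b + 1 := by linear_combination h
      exact (step b hb ha).symm
    · obtain rfl : b = a + 1 := by linear_combination h
      exact step a ha hb
  · intro h
    have root : ∀ w, ∀ B ∈ P, w ∈ B → prevCut (cuts P) w + 1 ∈ B := by
      refine prevCut_induction hS (fun i hi B _ hB => by rwa [prevCut_add_one_of_mem hi]) ?_
      intro i hi ih B hB hiB
      obtain ⟨C, hC, hiC, hiC'⟩ := notMem_cuts.1 hi
      rw [prevCut_add_one_of_notMem hS hi, ← hP.1.eq_of_mem_s9 hC hB hiC' hiB]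
      exact ih C hC hiC
    obtain ⟨B, ⟨hB, hu⟩, -⟩ := hP.1.2 u
    obtain ⟨C, ⟨hC, hv⟩, -⟩ := hP.1.2 v
    refine ⟨B, hB, hu, hP.1.eq_of_mem_s9 hC hB (root v C hC hv) ?_ ▸ hv⟩
    exact h ▸ root u B hB hu

lemma eq_arcPartition_cuts (hP : IsConnPartition (cycleGraph (n + 2)) P)
    (hS : (cuts P).Nonempty) : P = arcPartition (cuts P) :=
  eq_fibers_of_sameBlock_iff hP.1 (sameBlock_iff_prevCut_eq hP hS)

lemma card_cuts (hP : IsConnPartition (cycleGraph (n + 2)) P) (hU : P ≠ {univ}) :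
    #(cuts P) = #P := by
  have hS := hP.1.cuts_nonempty hU
  conv_rhs => rw [eq_arcPartition_cuts hP hS]
  exact (card_arcPartition hS).symm

lemma one_lt_card_cuts (hP : IsConnPartition (cycleGraph (n + 2)) P) (hU : P ≠ {univ}) :
    1 < #(cuts P) := by
  have := card_pos.2 (hP.1.cuts_nonempty hU)
  have : #(cuts P) ≠ 1 := fun h => hU (hP.1.eq_singleton_univ_of_card_eq_one (card_cuts hP hU ▸ h))
  omega

end Cycle

lemma mem_connParts {α : Type*} [Fintype α] {G : SimpleGraph α} {P : Finset (Finset α)} :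
    P ∈ connParts G ↔ IsConnPartition G P := by
  simp [connParts]

lemma isConnPartition_singleton_univ {α : Type*} [Fintype α] {G : SimpleGraph α}
    (hG : G.Connected) : IsConnPartition G {univ} := by
  have := hG.nonempty
  refine ⟨⟨by simpa [eq_comm] using univ_nonempty.ne_empty, fun v => ⟨univ, by simp, by simp⟩⟩,
    fun B hB => ?_⟩
  rw [mem_singleton.1 hB, coe_univ]
  exact (induceUnivIso G).connected_iff.2 hG

lemma sum_connParts_cycleGraph_erase {n : ℕ} {M : Type*} [AddCommMonoid M] (f : ℕ → M) :
    ∑ P ∈ (connParts (cycleGraph (n + 2))).erase {univ}, f #P =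
      ∑ S ∈ (univ : Finset (Fin (n + 2))).powerset with 1 < #S, f #S := by
  refine sum_nbij' cuts arcPartition (fun P hP => ?_) (fun S hS => ?_) (fun P hP => ?_)
    (fun S hS => ?_) (fun P hP => ?_)
    <;> simp only [mem_erase, mem_connParts, mem_filter, mem_powerset, subset_univ, true_and]
      at *
  · exact one_lt_card_cuts hP.2 hP.1
  · have hne : S.Nonempty := card_pos.1 (by omega)
    refine ⟨fun h => ?_, isConnPartition_arcPartition hne⟩
    have := card_arcPartition hne
    rw [h, card_singleton] at this
    omega
  · exact (eq_arcPartition_cuts hP.2 (hP.2.1.cuts_nonempty hP.1)).symm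
  · exact cuts_arcPartition hS
  · rw [card_cuts hP.2 hP.1]

lemma sum_powerset_filter_one_lt_card {α R : Type*} [CommRing R] (s : Finset α) (x : R) :
    ∑ t ∈ s.powerset with 1 < #t, x ^ #t = (1 + x) ^ #s - 1 - #s * x := by
  have total : ∑ t ∈ s.powerset, x ^ #t = (1 + x) ^ #s := by
    simpa [add_comm] using sum_pow_mul_eq_add_pow x 1 s
  rw [sum_filter, ← total, sum_powerset_apply_card (fun m => if 1 < m then x ^ m else 0),
    sum_powerset_apply_card (fun m => x ^ m)]
  rcases #s with _ | _ | k
  · simp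
  · simp [sum_range_succ]
  · rw [sum_range_succ' _ (k + 2), sum_range_succ' _ (k + 1), sum_range_succ' _ (k + 2),
      sum_range_succ' _ (k + 1)]
    simp

/-- For the cycle `C_n` with `n ≥ 3`, `Q(C_n,x) = (1+x)^n - 1 - (n-1)x`. -/
theorem cycle_partition_polynomial (n : ℕ) (hn : 3 ≤ n) (x : ℤ) :
    Q (SimpleGraph.cycleGraph n) x = (1 + x) ^ n - 1 - ((n : ℤ) - 1) * x := by
  obtain ⟨m, rfl⟩ : ∃ m, n = m + 2 := ⟨n - 2, by omega⟩
  have hsingle : {univ} ∈ connParts (cycleGraph (m + 2)) :=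
    mem_connParts.2 (isConnPartition_singleton_univ cycleGraph_connected)
  rw [Q, ← add_sum_erase _ _ hsingle, sum_connParts_cycleGraph_erase (x ^ ·),
    sum_powerset_filter_one_lt_card, card_univ, Fintype.card_fin, card_singleton]
  push_cast
  ring
end

section
/- Let n, m be nonnegative integers with 2m ≤ n, and let M_m be a matching with exactly m edges in the complete graph K_n. Then Q(K_n − M_m, x) = Σ_{i=0}^{m} Σ_{j=0}^{n−2i} C(m,i)·(−1)^i·S(n−2i, j)·x^{i+j}, where K_n − M_m is the graph obtained from K_n by deleting the m matching edges, C(a,b) is the binomial coefficient and S(a,b) is the Stirling number of the second kind. -/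
/-!
A block of a set partition induces a connected subgraph of `K_n - M` exactly when it is not
the vertex set of an edge of `M`: two non-adjacent vertices of a block span an edge of `M`, and
since `M` is a matching every third vertex of the block is adjacent to both. Hence `Q` is the sum
of `x ^ #P` over the set partitions `P` having no edge of `M` as a block, and inclusion–exclusion
turns this into a signed sum, over `S ⊆ M`, of the same sum over the partitions containing every
edge of `S` as a block. Deleting these `#S` blocks leaves an arbitrary partition of the other
`n - 2 * #S` vertices, which are counted by the Stirling numbers.
-/

open Finset

variable {V : Type*} [Fintype V] [DecidableEq V]

open scoped Classical in
/-- The Stirling number of the second kind `S(a,b)`: the number of set partitions of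
an `a`-element set into exactly `b` blocks (so `S(0,0) = 1`). -/
noncomputable def stirlingSnd (a b : ℕ) : ℕ :=
  (Finset.univ.filter
    (fun P : Finset (Finset (Fin a)) => IsPartition P ∧ P.card = b)).card

def IsPartitionOn {α : Type*} (T : Finset α) (P : Finset (Finset α)) : Prop :=
  ∅ ∉ P ∧ (∀ B ∈ P, B ⊆ T) ∧ ∀ v ∈ T, ∃! B, B ∈ P ∧ v ∈ B

theorem isPartitionOn_univ_iff {α : Type*} [Fintype α] {P : Finset (Finset α)} :
    IsPartitionOn univ P ↔ IsPartition P := by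
  simp [IsPartitionOn, IsPartition]

namespace IsPartitionOn

variable {α : Type*} {T U : Finset α} {P D : Finset (Finset α)}

theorem eq_of_mem_of_mem (hP : IsPartitionOn T P) {B C : Finset α} (hB : B ∈ P) (hC : C ∈ P)
    {v : α} (hvB : v ∈ B) (hvC : v ∈ C) : B = C :=
  (hP.2.2 v (hP.2.1 B hB hvB)).unique ⟨hB, hvB⟩ ⟨hC, hvC⟩

theorem pairwiseDisjoint (hP : IsPartitionOn T P) : (P : Set (Finset α)).PairwiseDisjoint id :=
  fun _ hB _ hC hne => disjoint_left.2 fun _ hvB hvC => hne (hP.eq_of_mem_of_mem hB hC hvB hvC)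

theorem nonempty_of_mem (hP : IsPartitionOn T P) {B : Finset α} (hB : B ∈ P) : B.Nonempty :=
  nonempty_iff_ne_empty.2 (ne_of_mem_of_not_mem hB hP.1)

theorem card_le [DecidableEq α] (hP : IsPartitionOn T P) : #P ≤ #T :=
  (card_le_card_biUnion hP.pairwiseDisjoint fun _ => hP.nonempty_of_mem).trans
    (card_le_card (biUnion_subset.2 hP.2.1))

theorem of_pairwiseDisjoint (hP₀ : ∅ ∉ P) (hsub : ∀ B ∈ P, B ⊆ T)
    (hcover : ∀ v ∈ T, ∃ B ∈ P, v ∈ B) (hdisj : (P : Set (Finset α)).PairwiseDisjoint id) :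
    IsPartitionOn T P := by
  refine ⟨hP₀, hsub, fun v hv => ?_⟩
  obtain ⟨B, hB, hvB⟩ := hcover v hv
  refine ⟨B, ⟨hB, hvB⟩, fun C ⟨hC, hvC⟩ => ?_⟩
  by_contra hCB
  exact disjoint_left.1 (hdisj hC hB hCB) hvC hvB

theorem disjoint (hP : IsPartitionOn T P) (hD : IsPartitionOn U D) (hTU : Disjoint T U) :
    Disjoint P D :=
  disjoint_left.2 fun B hBP hBD => by
    obtain ⟨v, hv⟩ := hP.nonempty_of_mem hBP
    exact disjoint_left.1 hTU (hP.2.1 B hBP hv) (hD.2.1 B hBD hv)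

theorem union [DecidableEq α] (hP : IsPartitionOn T P) (hD : IsPartitionOn U D)
    (hTU : Disjoint T U) : IsPartitionOn (T ∪ U) (P ∪ D) := by
  refine of_pairwiseDisjoint (by simp [hP.1, hD.1]) ?_ ?_ ?_
  · simp only [mem_union]
    rintro B (hB | hB)
    exacts [(hP.2.1 B hB).trans subset_union_left, (hD.2.1 B hB).trans subset_union_right]
  · simp only [mem_union]
    rintro v (hv | hv)
    · obtain ⟨B, ⟨hB, hvB⟩, -⟩ := hP.2.2 v hv
      exact ⟨B, .inl hB, hvB⟩
    · obtain ⟨B, ⟨hB, hvB⟩, -⟩ := hD.2.2 v hv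
      exact ⟨B, .inr hB, hvB⟩
  · rw [coe_union, Set.pairwiseDisjoint_union]
    exact ⟨hP.pairwiseDisjoint, hD.pairwiseDisjoint, fun B hB C hC _ =>
      hTU.mono (hP.2.1 B hB) (hD.2.1 C hC)⟩

theorem sdiff [DecidableEq α] (hP : IsPartitionOn (T ∪ U) P) (hD : IsPartitionOn U D)
    (hDP : D ⊆ P) (hTU : Disjoint T U) : IsPartitionOn T (P \ D) := by
  refine of_pairwiseDisjoint (fun h => hP.1 (mem_sdiff.1 h).1) ?_ ?_
    (hP.pairwiseDisjoint.subset (by simp))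
  · intro B hB v hvB
    rw [mem_sdiff] at hB
    refine (mem_union.1 (hP.2.1 B hB.1 hvB)).resolve_right fun hvU => hB.2 ?_
    obtain ⟨C, ⟨hC, hvC⟩, -⟩ := hD.2.2 v hvU
    rwa [hP.eq_of_mem_of_mem hB.1 (hDP hC) hvB hvC]
  · intro v hvT
    obtain ⟨B, ⟨hB, hvB⟩, -⟩ := hP.2.2 v (mem_union_left U hvT)
    exact ⟨B, mem_sdiff.2 ⟨hB, fun hBD => disjoint_left.1 hTU hvT (hD.2.1 B hBD hvB)⟩, hvB⟩

end IsPartitionOn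

theorem card_image_of_pairwiseDisjoint {ι α : Type*} [DecidableEq α] {s : Finset ι}
    {g : ι → Finset α} (hne : ∀ i ∈ s, (g i).Nonempty) (hdisj : (s : Set ι).PairwiseDisjoint g) :
    #(s.image g) = #s := by
  refine card_image_of_injOn fun i hi j hj hij => ?_
  by_contra hne'
  obtain ⟨v, hv⟩ := hne i hi
  exact disjoint_left.1 (hdisj hi hj hne') hv (hij ▸ hv)

theorem isPartitionOn_biUnion_image {ι α : Type*} [DecidableEq α] {s : Finset ι}
    {g : ι → Finset α} (hne : ∀ i ∈ s, (g i).Nonempty) (hdisj : (s : Set ι).PairwiseDisjoint g) :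
    IsPartitionOn (s.biUnion g) (s.image g) := by
  refine .of_pairwiseDisjoint ?_ ?_ ?_ ?_
  · simp only [mem_image, not_exists, not_and]
    exact fun i hi hgi => (hne i hi).ne_empty hgi
  · simp only [mem_image, forall_exists_index, and_imp, forall_apply_eq_imp_iff₂]
    exact fun i hi => subset_biUnion_of_mem g hi
  · simp only [mem_biUnion, mem_image, exists_exists_and_eq_and, imp_self, implies_true]
  · rw [coe_image]
    rintro _ ⟨i, hi, rfl⟩ _ ⟨j, hj, rfl⟩ hij
    exact hdisj hi hj fun h => hij (h ▸ rfl)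

theorem isPartitionOn_map_iff {α β : Type*} (f : α ↪ β) {s : Finset α} {P : Finset (Finset α)} :
    IsPartitionOn (s.map f) (P.map (mapEmbedding f).toEmbedding) ↔ IsPartitionOn s P := by
  simp only [IsPartitionOn, mem_map, RelEmbedding.coe_toEmbedding, mapEmbedding_apply,
    map_eq_empty, exists_eq_right, forall_exists_index, and_imp, forall_apply_eq_imp_iff₂,
    map_subset_map, ExistsUnique, existsAndEq, and_true, map_inj, EmbeddingLike.apply_eq_iff_eq,
    and_congr_right_iff]
  refine fun _ _ => forall₂_congr fun a _ => exists_congr fun _ =>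
    and_congr_right fun _ => forall₂_congr fun C _ => ?_
  exact ⟨fun h ha => h a ha rfl, fun h _ hx hxa => h (hxa ▸ hx)⟩

open scoped Classical in
theorem card_isPartitionOn_map {α β : Type*} [Fintype α] [Fintype β] (f : α ↪ β) (s : Finset α)
    (k : ℕ) :
    #{Q : Finset (Finset β) | IsPartitionOn (s.map f) Q ∧ #Q = k}
      = #{P : Finset (Finset α) | IsPartitionOn s P ∧ #P = k} := by
  set g := (mapEmbedding f).toEmbedding
  suffices h : ({Q : Finset (Finset β) | IsPartitionOn (s.map f) Q ∧ #Q = k} : Finset _)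
      = ({P : Finset (Finset α) | IsPartitionOn s P ∧ #P = k} : Finset _).map
          (mapEmbedding g).toEmbedding by
    rw [h, card_map]
  ext Q
  simp only [mem_filter, mem_univ, true_and, mem_map, RelEmbedding.coe_toEmbedding,
    mapEmbedding_apply]
  constructor
  · rintro ⟨hQ, rfl⟩
    have hQg : Q ⊆ univ.map g := fun B hB => by
      obtain ⟨u, -, rfl⟩ := subset_map_iff.1 (hQ.2.1 B hB)
      exact mem_map_of_mem g (mem_univ u)
    obtain ⟨P, -, rfl⟩ := subset_map_iff.1 hQg
    exact ⟨P, ⟨(isPartitionOn_map_iff f).1 hQ, (card_map g).symm⟩, rfl⟩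
  · rintro ⟨P, ⟨hP, rfl⟩, rfl⟩
    exact ⟨(isPartitionOn_map_iff f).2 hP, card_map g⟩

open scoped Classical in
theorem card_isPartitionOn_eq_stirlingSnd {α : Type*} [Fintype α] (T : Finset α) (k : ℕ) :
    #{P : Finset (Finset α) | IsPartitionOn T P ∧ #P = k} = stirlingSnd #T k := by
  let f : Fin #T ↪ α := T.equivFin.symm.toEmbedding.trans (Function.Embedding.subtype _)
  have hf : univ.map f = T := by
    rw [← map_map T.equivFin.symm.toEmbedding, map_univ_equiv, univ_eq_attach, attach_map_val]
  calc _ = #{P : Finset (Finset (Fin #T)) | IsPartitionOn univ P ∧ #P = k} := by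
        rw [← card_isPartitionOn_map f, hf]
    _ = stirlingSnd #T k := by
        simp only [isPartitionOn_univ_iff]
        rfl

open scoped Classical in
theorem sum_isPartitionOn_eq_sum_stirlingSnd {α M : Type*} [Fintype α] [AddCommMonoid M]
    (T : Finset α) (f : ℕ → M) :
    ∑ P ∈ {P : Finset (Finset α) | IsPartitionOn T P}, f #P
      = ∑ j ∈ range (#T + 1), stirlingSnd #T j • f j := by
  rw [← sum_fiberwise_of_maps_to (g := card) (t := range (#T + 1))
    fun P hP => mem_range_succ_iff.2 (mem_filter.1 hP).2.card_le]
  refine sum_congr rfl fun j _ => ?_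
  rw [filter_filter, ← card_isPartitionOn_eq_stirlingSnd, ← sum_const]
  exact sum_congr rfl fun P hP => by rw [(mem_filter.1 hP).2.2]

open scoped Classical in
theorem sum_isPartition_superset_eq_sum_isPartitionOn_compl {α M : Type*} [Fintype α]
    [DecidableEq α] [AddCommMonoid M] {U : Finset α} {D : Finset (Finset α)}
    (hD : IsPartitionOn U D) (f : ℕ → M) :
    ∑ P ∈ {P : Finset (Finset α) | IsPartition P ∧ D ⊆ P}, f #P
      = ∑ P ∈ {P : Finset (Finset α) | IsPartitionOn Uᶜ P}, f (#D + #P) := by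
  have hUc : Disjoint Uᶜ U := disjoint_compl_left
  have hU : Uᶜ ∪ U = univ := compl_sup_eq_top
  refine sum_nbij' (· \ D) (· ∪ D) (fun P hP => ?_) (fun P hP => ?_) (fun P hP => ?_)
    (fun P hP => ?_) (fun P hP => ?_)
  all_goals simp only [mem_filter, mem_univ, true_and] at hP ⊢
  · rw [← isPartitionOn_univ_iff, ← hU] at hP
    exact hP.1.sdiff hD hP.2 hUc
  · rw [← isPartitionOn_univ_iff, ← hU]
    exact ⟨hP.union hD hUc, subset_union_right⟩
  · exact sdiff_union_of_subset hP.2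
  · exact union_sdiff_cancel_right (hP.disjoint hD hUc)
  · rw [add_comm, card_sdiff_add_card_eq_card hP.2]

namespace SimpleGraph

variable {α : Type*}

theorem not_connected_induce_pair {G : SimpleGraph α} {a b : α} (hab : a ≠ b)
    (h : ¬G.Adj a b) : ¬(G.induce {a, b}).Connected := by
  intro hconn
  obtain ⟨p⟩ := hconn.preconnected ⟨a, .inl rfl⟩ ⟨b, .inr rfl⟩
  cases p with
  | nil => exact hab rfl
  | @cons _ w _ hadj _ =>
    obtain ⟨w, rfl | rfl⟩ := w
    · exact hadj.ne rfl
    · exact h hadj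

variable [DecidableEq α] {M : Finset (Sym2 α)}

theorem connected_induce_top_deleteEdges
    (hmatch : ∀ e ∈ M, ∀ f ∈ M, e ≠ f → ∀ v : α, v ∈ e → v ∉ f) {B : Finset α}
    (hB : B.Nonempty) (hBM : ∀ e ∈ M, e.toFinset ≠ B) :
    (((⊤ : SimpleGraph α).deleteEdges M).induce (B : Set α)).Connected := by
  have adj {u v : α} (hu : u ∈ B) (hv : v ∈ B) (huv : u ≠ v) (hM : s(u, v) ∉ M) :
      (((⊤ : SimpleGraph α).deleteEdges M).induce (B : Set α)).Reachable ⟨u, hu⟩ ⟨v, hv⟩ :=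
    Adj.reachable (by simp [huv, hM])
  have := hB.coe_sort
  refine .mk fun ⟨u, hu⟩ ⟨v, hv⟩ => ?_
  rw [mem_coe] at hu hv
  obtain rfl | huv := eq_or_ne u v
  · rfl
  by_cases hM : s(u, v) ∈ M
  swap
  · exact adj hu hv huv hM
  obtain ⟨z, hzB, hz⟩ : ∃ z ∈ B, z ∉ s(u, v).toFinset := by
    refine exists_of_ssubset (ssubset_of_subset_of_ne ?_ (hBM _ hM))
    simp [Sym2.toFinset_mk_eq, insert_subset_iff, hu, hv]
  rw [Sym2.mem_toFinset, Sym2.mem_iff, not_or] at hz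
  have huz : s(u, z) ∉ M := fun h =>
    hmatch _ hM _ h (fun h => hz.2 (Sym2.congr_right.1 h).symm) u (Sym2.mem_mk_left u v)
      (Sym2.mem_mk_left u z)
  have hzv : s(z, v) ∉ M := fun h =>
    hmatch _ hM _ h (fun h => hz.1 (Sym2.congr_left.1 h).symm) v (Sym2.mem_mk_right u v)
      (Sym2.mem_mk_right z v)
  exact (adj hu hzB (Ne.symm hz.1) huz).trans (adj hzB hv hz.2 hzv)

end SimpleGraph

open scoped Classical in
theorem connParts_top_deleteEdges {α : Type*} [Fintype α] [DecidableEq α] {M : Finset (Sym2 α)}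
    (hME : (M : Set (Sym2 α)) ⊆ (⊤ : SimpleGraph α).edgeSet)
    (hmatch : ∀ e ∈ M, ∀ f ∈ M, e ≠ f → ∀ v : α, v ∈ e → v ∉ f) :
    connParts ((⊤ : SimpleGraph α).deleteEdges M)
      = ({P | IsPartition P ∧ ∀ e ∈ M, e.toFinset ∉ P} : Finset (Finset (Finset α))) := by
  ext P
  simp only [connParts, IsConnPartition, mem_filter, mem_univ, true_and]
  refine and_congr_right fun hP => ⟨fun hconn e he heP => ?_, fun hM B hB => ?_⟩
  · induction e using Sym2.ind with
    | _ a b =>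
    have hab : a ≠ b := hME he
    have hconn := hconn _ heP
    rw [Sym2.toFinset_mk_eq, coe_pair] at hconn
    exact SimpleGraph.not_connected_induce_pair hab (by simp [he]) hconn
  · exact SimpleGraph.connected_induce_top_deleteEdges hmatch
      (nonempty_iff_ne_empty.2 (ne_of_mem_of_not_mem hB hP.1)) fun e he heB => hM e he (heB ▸ hB)

theorem sum_filter_forall_not_eq_sum_powerset {ι α G : Type*} [Fintype α] [AddCommGroup G]
    (s : Finset ι) (p : α → Prop) (q : ι → α → Prop) [DecidablePred p] [∀ i, DecidablePred (q i)]
    (f : α → G) :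
    ∑ a ∈ {a | p a ∧ ∀ i ∈ s, ¬q i a}, f a
      = ∑ t ∈ s.powerset, (-1 : ℤ) ^ #t • ∑ a ∈ {a | p a ∧ ∀ i ∈ t, q i a}, f a := by
  classical
  have := inclusion_exclusion_sum_inf_compl s (fun i => {a | q i a}) fun a => if p a then f a else 0
  simp only [← sum_filter] at this
  convert this using 1
  · congr 1; ext a; simp [mem_inf, and_comm]
  · refine sum_congr rfl fun t _ => ?_
    congr 2; ext a; simp [mem_inf, and_comm]

open scoped Classical in
theorem sum_isPartition_toFinset_mem_eq_sum_stirlingSnd {α M : Type*} [Fintype α] [DecidableEq α]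
    [AddCommMonoid M] {t : Finset (Sym2 α)} (hdiag : ∀ e ∈ t, ¬e.IsDiag)
    (hdisj : (t : Set (Sym2 α)).PairwiseDisjoint Sym2.toFinset) (f : ℕ → M) :
    ∑ P ∈ {P : Finset (Finset α) | IsPartition P ∧ ∀ e ∈ t, e.toFinset ∈ P}, f #P
      = ∑ j ∈ range (Fintype.card α - 2 * #t + 1),
          stirlingSnd (Fintype.card α - 2 * #t) j • f (#t + j) := by
  have hne : ∀ e ∈ t, e.toFinset.Nonempty := fun e _ => nonempty_iff_ne_empty.2 e.toFinset_ne_empty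
  have hcard : #(t.biUnion Sym2.toFinset)ᶜ = Fintype.card α - 2 * #t := by
    rw [card_compl, card_biUnion hdisj, sum_congr rfl fun e he => e.card_toFinset_of_not_isDiag
      (hdiag e he), sum_const, smul_eq_mul, mul_comm]
  simp_rw [← image_subset_iff]
  rw [sum_isPartition_superset_eq_sum_isPartitionOn_compl (isPartitionOn_biUnion_image hne hdisj),
    card_image_of_pairwiseDisjoint hne hdisj, sum_isPartitionOn_eq_sum_stirlingSnd _ (f <| #t + ·),
    hcard]

open scoped Classical in
theorem Q_top_deleteEdges_of_matching {α : Type*} [Fintype α] [DecidableEq α]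
    {M : Finset (Sym2 α)} (hME : (M : Set (Sym2 α)) ⊆ (⊤ : SimpleGraph α).edgeSet)
    (hmatch : ∀ e ∈ M, ∀ f ∈ M, e ≠ f → ∀ v : α, v ∈ e → v ∉ f) (x : ℤ) :
    Q ((⊤ : SimpleGraph α).deleteEdges M) x
      = ∑ i ∈ range (#M + 1), ∑ j ∈ range (Fintype.card α - 2 * i + 1),
          ((#M).choose i : ℤ) * (-1) ^ i * (stirlingSnd (Fintype.card α - 2 * i) j : ℤ)
            * x ^ (i + j) := by
  have hdiag : ∀ e ∈ M, ¬e.IsDiag := fun _ he => SimpleGraph.not_isDiag_of_mem_edgeSet _ (hME he)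
  have hdisj : (M : Set (Sym2 α)).PairwiseDisjoint Sym2.toFinset := fun e he f hf hef =>
    disjoint_left.2 fun v hve hvf =>
      hmatch e he f hf hef v (Sym2.mem_toFinset.1 hve) (Sym2.mem_toFinset.1 hvf)
  rw [Q, connParts_top_deleteEdges hME hmatch]
  calc _ = ∑ t ∈ M.powerset, (-1 : ℤ) ^ #t •
          ∑ P ∈ {P : Finset (Finset α) | IsPartition P ∧ ∀ e ∈ t, e.toFinset ∈ P}, x ^ #P := by
        -- `convert` rather than `rw`: the two filters carry different `Decidable` instances
        convert sum_filter_forall_not_eq_sum_powerset M IsPartition (fun e P => e.toFinset ∈ P)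
          (x ^ #·)
    _ = ∑ t ∈ M.powerset, (-1 : ℤ) ^ #t • ∑ j ∈ range (Fintype.card α - 2 * #t + 1),
          stirlingSnd (Fintype.card α - 2 * #t) j • x ^ (#t + j) := by
        refine sum_congr rfl fun t ht => ?_
        have ht := mem_powerset.1 ht
        rw [sum_isPartition_toFinset_mem_eq_sum_stirlingSnd (fun e he => hdiag e (ht he))
          (hdisj.subset (coe_subset.2 ht))]
    _ = _ := by
        rw [sum_powerset_apply_card fun i => (-1 : ℤ) ^ i •
          ∑ j ∈ range (Fintype.card α - 2 * i + 1),
            stirlingSnd (Fintype.card α - 2 * i) j • x ^ (i + j)]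
        refine sum_congr rfl fun i _ => ?_
        simp only [smul_sum, nsmul_eq_mul, zsmul_eq_mul]
        refine sum_congr rfl fun j _ => ?_
        push_cast
        ring

theorem completeGraph_minus_matching_general (n m : ℕ)
    (M : Finset (Sym2 (Fin n))) (hcard : M.card = m)
    (hME : (M : Set (Sym2 (Fin n))) ⊆ (⊤ : SimpleGraph (Fin n)).edgeSet)
    (hmatch : ∀ e ∈ M, ∀ f ∈ M, e ≠ f → ∀ v : Fin n, v ∈ e → v ∉ f) (x : ℤ) :
    Q ((⊤ : SimpleGraph (Fin n)).deleteEdges (M : Set (Sym2 (Fin n)))) x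
      = ∑ i ∈ Finset.range (m + 1), ∑ j ∈ Finset.range (n - 2 * i + 1),
          (m.choose i : ℤ) * (-1) ^ i * (stirlingSnd (n - 2 * i) j : ℤ)
            * x ^ (i + j) := by
  rw [Q_top_deleteEdges_of_matching hME hmatch x, Fintype.card_fin, hcard]

/-- The partition polynomial of the complete graph minus a matching of `m` edges. -/
theorem completeGraph_minus_matching (n m : ℕ) (hnm : 2 * m ≤ n)
    (M : Finset (Sym2 (Fin n))) (hcard : M.card = m)
    (hME : (M : Set (Sym2 (Fin n))) ⊆ (⊤ : SimpleGraph (Fin n)).edgeSet)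
    (hmatch : ∀ e ∈ M, ∀ f ∈ M, e ≠ f → ∀ v : Fin n, v ∈ e → v ∉ f) (x : ℤ) :
    Q ((⊤ : SimpleGraph (Fin n)).deleteEdges (M : Set (Sym2 (Fin n)))) x
      = ∑ i ∈ Finset.range (m + 1), ∑ j ∈ Finset.range (n - 2 * i + 1),
          (m.choose i : ℤ) * (-1) ^ i * (stirlingSnd (n - 2 * i) j : ℤ)
            * x ^ (i + j) :=
  completeGraph_minus_matching_general n m M hcard hME hmatch x
end
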